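/- arXiv:2508.18946 — 2 statements merged into one kernel-verified Lean document; each statement's English description precedes it below -/
import Mathlib

section
/- Let a, n ∈ ℤ with a ≥ 1 and n ≥ 2, and let p be a prime with p > a + 1. Then the polynomial f_{n,a,p}(x) = x^n − a·x^{n−1} − p has at least two distinct complex roots of modulus strictly greater than 1; in particular, if λ denotes its unique positive real root, there exists a complex root α ≠ λ with |α| > 1. -/
open Polynomial

/-- The polynomial `f_{n,a,p}(x) = x^n - a*x^(n-1) - p` in `ℤ[x]`. -/
noncomputable def fnap (n : ℕ) (a p : ℤ) : Polynomial ℤ :=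
  X ^ n - C a * X ^ (n - 1) - C p

/-!
By Vieta, the product of the absolute values of the roots of `f = f_{n,a,p}` is `|f(0)| = p`,
so bounding it by the Mahler measure, i.e. the product of `max 1 |z|` over the roots, shows that
some root lies outside the unit disk. The roots of `f` are simple, so if `z` were the only one
outside the unit disk we would get `p ≤ |z|`. But every root satisfies
`|z|^(n-1) (|z| - a) ≤ p`, which is incompatible with `|z| ≥ p > a + 1`.
-/

namespace Polynomial

theorem mahlerMeasure_le_max_one_norm {P : ℂ[X]} (hP : P.Monic) (hnd : P.roots.Nodup) (z : ℂ)
    (h : ∀ w ∈ P.roots, w ≠ z → ‖w‖ ≤ 1) : P.mahlerMeasure ≤ max 1 ‖z‖ := by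
  classical
  have prod_eq_one : ∀ s ≤ P.roots, z ∉ s → (s.map fun w ↦ max 1 ‖w‖).prod = 1 := by
    intro s hs hzs
    refine Multiset.prod_eq_one fun x hx ↦ ?_
    obtain ⟨w, hw, rfl⟩ := Multiset.mem_map.1 hx
    exact max_eq_left (h w (Multiset.mem_of_le hs hw) (ne_of_mem_of_not_mem hw hzs))
  rw [mahlerMeasure_eq_leadingCoeff_mul_prod_roots, hP.leadingCoeff, norm_one, one_mul]
  by_cases hz : z ∈ P.roots
  · rw [← Multiset.cons_erase hz, Multiset.map_cons, Multiset.prod_cons,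
      prod_eq_one _ (Multiset.erase_le z _) (Multiset.Nodup.notMem_erase hnd), mul_one]
  · rw [prod_eq_one _ le_rfl hz]
    exact le_max_left _ _

theorem exists_mem_roots_ne_one_lt_norm {P : ℂ[X]} (hP : P.Monic) (hnd : P.roots.Nodup) (z : ℂ)
    (hz : max 1 ‖z‖ < ‖P.coeff 0‖) : ∃ w ∈ P.roots, w ≠ z ∧ 1 < ‖w‖ := by
  by_contra! h
  have := norm_coeff_le_choose_mul_mahlerMeasure 0 P
  rw [Nat.choose_zero_right, Nat.cast_one, one_mul] at this
  exact hz.not_ge (this.trans (mahlerMeasure_le_max_one_norm hP hnd z h))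

end Polynomial

section fnap

variable {n : ℕ} {a p : ℤ}

theorem fnap_map {R : Type*} [CommRing R] (f : ℤ →+* R) :
    (fnap n a p).map f = X ^ n - C (a : R) * X ^ (n - 1) - C (p : R) := by
  simp [fnap]

theorem fnap_monic (hn : 1 ≤ n) : (fnap n a p).Monic := by
  unfold fnap
  monicity!
  all_goals omega

theorem coeff_zero_fnap (hn : 2 ≤ n) : (fnap n a p).coeff 0 = -p := by
  obtain ⟨m, rfl⟩ : ∃ m, n = m + 2 := ⟨n - 2, by omega⟩
  simp [fnap, coeff_X_pow]

theorem aeval_fnap {A : Type*} [CommRing A] (z : A) :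
    aeval z (fnap n a p) = z ^ n - a * z ^ (n - 1) - p := by
  simp [fnap]

/- At a double root `z`, `f'(z) = 0` forces `z = a(n-1)/n ≥ 0`, while
`n f(z) - z f'(z) = -(a z^(n-1) + n p)` is then negative. -/
theorem nodup_aroots_fnap (ha : 0 ≤ a) (hp : 0 < p) (hn : 2 ≤ n) :
    ((fnap n a p).aroots ℂ).Nodup := by
  classical
  obtain ⟨m, rfl⟩ : ∃ m, n = m + 2 := ⟨n - 2, by omega⟩
  have hne : (fnap (m + 2) a p).map (algebraMap ℤ ℂ) ≠ 0 :=
    ((fnap_monic (by omega)).map _).ne_zero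
  refine Multiset.nodup_iff_count_le_one.2 fun z ↦ not_lt.1 fun hz ↦ ?_
  rw [aroots, count_roots, one_lt_rootMultiplicity_iff_isRoot hne, fnap_map] at hz
  obtain ⟨hf, hf'⟩ := hz
  simp only [IsRoot, eval_sub, eval_mul, eval_pow, eval_C, eval_X, derivative_sub,
    derivative_mul, derivative_X_pow, derivative_C, zero_mul, zero_add, sub_zero,
    show m + 2 - 1 = m + 1 by omega, Nat.add_sub_cancel] at hf hf'
  push_cast at hf hf'
  have hz0 : z ≠ 0 := by
    rintro rfl
    simp at hf
    omega
  have hkey : (a : ℂ) * z ^ (m + 1) + (m + 2) * p = 0 := by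
    linear_combination (-(m + 2) : ℂ) * hf + z * hf'
  have hcrit : ((m : ℂ) + 2) * z = a * (m + 1) := by
    refine mul_right_cancel₀ (pow_ne_zero m hz0) ?_
    linear_combination hf'
  set r : ℝ := a * (m + 1) / (m + 2)
  have hzr : z = r := by
    have hm : (m : ℂ) + 2 ≠ 0 := by exact_mod_cast (by omega : m + 2 ≠ 0)
    simp only [r]
    push_cast
    rw [eq_div_iff hm]
    linear_combination hcrit
  have hr : 0 ≤ r := by positivity
  have hkey' : (a : ℝ) * r ^ (m + 1) + (m + 2) * p = 0 := by
    exact_mod_cast hzr ▸ hkey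
  have hp' : (0 : ℝ) < p := by exact_mod_cast hp
  have ha' : (0 : ℝ) ≤ a := by exact_mod_cast ha
  nlinarith [pow_nonneg hr (m + 1)]

theorem norm_lt_of_aeval_fnap_eq_zero (ha : 0 ≤ a) (hn : 2 ≤ n) (hpa : a + 1 < p) {z : ℂ}
    (hz : aeval z (fnap n a p) = 0) : ‖z‖ < p := by
  obtain ⟨m, rfl⟩ : ∃ m, n = m + 2 := ⟨n - 2, by omega⟩
  rw [aeval_fnap, show m + 2 - 1 = m + 1 by omega, sub_eq_zero, sub_eq_iff_eq_add'] at hz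
  have ha' : (0 : ℝ) ≤ a := by exact_mod_cast ha
  have hp' : (0 : ℝ) ≤ p := by exact_mod_cast (by omega : (0 : ℤ) ≤ p)
  have hbound : ‖z‖ ^ (m + 2) ≤ a * ‖z‖ ^ (m + 1) + p := by
    calc ‖z‖ ^ (m + 2) = ‖(a : ℂ) * z ^ (m + 1) + p‖ := by rw [← norm_pow, hz]
      _ ≤ ‖(a : ℂ) * z ^ (m + 1)‖ + ‖(p : ℂ)‖ := norm_add_le _ _
      _ = a * ‖z‖ ^ (m + 1) + p := by
        rw [norm_mul, norm_pow, Complex.norm_intCast, Complex.norm_intCast, abs_of_nonneg ha',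
          abs_of_nonneg hp']
  by_contra! hpz
  have hpa' : (a : ℝ) + 1 < p := by exact_mod_cast hpa
  have hz1 : 1 ≤ ‖z‖ := by linarith
  have hpow : ‖z‖ ≤ ‖z‖ ^ (m + 1) := le_self_pow₀ hz1 (by omega)
  nlinarith [pow_succ ‖z‖ (m + 1)]

end fnap

theorem stmt_11 (a : ℤ) (n : ℕ) (p : ℕ) (ha : 1 ≤ a) (hn : 2 ≤ n) (hp : p.Prime)
    (hpa : a + 1 < (p : ℤ)) :
    (∃ α β : ℂ, α ≠ β ∧ Polynomial.aeval α (fnap n a (p : ℤ)) = 0 ∧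
      Polynomial.aeval β (fnap n a (p : ℤ)) = 0 ∧
      1 < ‖α‖ ∧ 1 < ‖β‖) ∧
    ∀ lam : ℝ, 0 < lam → Polynomial.aeval lam (fnap n a (p : ℤ)) = 0 →
      ∃ α : ℂ, Polynomial.aeval α (fnap n a (p : ℤ)) = 0 ∧ α ≠ (lam : ℂ) ∧
        1 < ‖α‖ := by
  have hmonic := (fnap_monic (a := a) (p := p) (by omega : 1 ≤ n)).map (algebraMap ℤ ℂ)
  have hnd := nodup_aroots_fnap (a := a) (p := p) (by omega) (by exact_mod_cast hp.pos) hn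
  have hcoeff : ‖((fnap n a p).map (algebraMap ℤ ℂ)).coeff 0‖ = p := by
    simp [coeff_zero_fnap hn]
  obtain ⟨β, hβ, -, hβ1⟩ := exists_mem_roots_ne_one_lt_norm hmonic hnd 0
    (by rw [hcoeff]; simpa using hp.one_lt)
  have hβp := norm_lt_of_aeval_fnap_eq_zero (by omega) hn hpa (mem_aroots.1 hβ).2
  obtain ⟨α, hα, hαβ, hα1⟩ := exists_mem_roots_ne_one_lt_norm hmonic hnd β
    (by rw [hcoeff, max_eq_right hβ1.le]; exact_mod_cast hβp)
  refine ⟨⟨α, β, hαβ, (mem_aroots.1 hα).2, (mem_aroots.1 hβ).2, hα1, hβ1⟩, fun lam _ _ ↦ ?_⟩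
  by_cases hαlam : α = lam
  · exact ⟨β, (mem_aroots.1 hβ).2, hαlam ▸ hαβ.symm, hβ1⟩
  · exact ⟨α, (mem_aroots.1 hα).2, hαlam, hα1⟩
end

section
/- Let n ≥ 2 and let f(x) = x^n + a_{n−1}x^{n−1} + a_{n−2}x^{n−2} + ⋯ + a_1 x + a_0 ∈ ℤ[x] with a_0 ≠ 0. If |a_{n−1}| = 1 + |a_{n−2}| + |a_{n−3}| + ⋯ + |a_0| and f(1) ≠ 0 and f(−1) ≠ 0, then f is irreducible over ℚ. -/
/-!
A root `z` of `f` on the unit circle gives `|z + a_{n-1}| ≤ ∑_{i<n-1} |a_i| = |a_{n-1}| - 1`,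
which forces `z = ±1`. Since `|a_0| ≥ 1` is the product of the moduli of the roots, `f` therefore
has a root `z` with `|z| > 1`. Writing `f = (X - z) q`, the relations `a_i = q_{i-1} - z q_i` and
the hypothesis on `a_{n-1}` give `∑_{i<n-1} |q_i| ≤ 1`, so every root of `q` lies in the closed,
hence in the open, unit disc. A monic integer factor of `f` not vanishing at `z` divides `q`, so its
constant term, a nonzero integer, is a product of numbers of modulus `< 1`: the factor is `1`.
-/

open Polynomial Finset

lemma Complex.eq_one_or_eq_neg_one_of_norm_add_le {z : ℂ} {a : ℝ} (hz : ‖z‖ = 1)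
    (h : ‖z + a‖ ≤ |a| - 1) : z = 1 ∨ z = -1 := by
  have ha : 1 ≤ |a| := by linarith [norm_nonneg (z + a)]
  have hsq := pow_le_pow_left₀ (norm_nonneg _) h 2
  have hz2 := congrArg (· ^ 2) hz
  simp only [Complex.sq_norm, Complex.normSq_apply, Complex.add_re, Complex.add_im,
    Complex.ofReal_re, Complex.ofReal_im, add_zero, one_pow] at hsq hz2
  -- expanding `‖z + a‖² ≤ (|a| - 1)²` with `‖z‖ = 1` leaves `a * re z ≤ -|a|`: `z = -sign a`
  have hlin : a * z.re ≤ -|a| := by nlinarith [sq_abs a]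
  have him : z.im = 0 := by cases abs_cases a <;> nlinarith
  have hre : z.re = -1 ∨ z.re = 1 := by
    rcases abs_cases a with ⟨ha', -⟩ | ⟨ha', -⟩
    · left; nlinarith
    · right; nlinarith
  rcases hre with hre | hre
  · exact .inr (Complex.ext (by simp [hre]) (by simp [him]))
  · exact .inl (Complex.ext (by simp [hre]) (by simp [him]))

namespace Polynomial

section NormedField

variable {K : Type*} [NormedField K]

lemma Monic.norm_pow_natDegree_le {p : K[X]} (hp : p.Monic) {z : K} (hz : p.IsRoot z) :
    ‖z‖ ^ p.natDegree ≤ ∑ i ∈ range p.natDegree, ‖p.coeff i‖ * ‖z‖ ^ i := by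
  rw [IsRoot.def, eval_eq_sum_range, sum_range_succ, hp.coeff_natDegree, one_mul,
    add_eq_zero_iff_neg_eq] at hz
  calc ‖z‖ ^ p.natDegree = ‖∑ i ∈ range p.natDegree, p.coeff i * z ^ i‖ := by
        rw [← norm_pow, ← hz, norm_neg]
    _ ≤ _ := (norm_sum_le _ _).trans_eq (by simp_rw [norm_mul, norm_pow])

lemma Monic.norm_le_one_of_sum_norm_coeff_le_one {p : K[X]} (hp : p.Monic)
    (hsum : ∑ i ∈ range p.natDegree, ‖p.coeff i‖ ≤ 1) {z : K} (hz : p.IsRoot z) : ‖z‖ ≤ 1 := by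
  by_contra! hz1
  have hpow : 0 < ‖z‖ ^ p.natDegree := pow_pos (zero_lt_one.trans hz1) _
  refine (lt_mul_of_one_lt_right hpow hz1).not_ge ?_
  calc ‖z‖ ^ p.natDegree * ‖z‖
      ≤ (∑ i ∈ range p.natDegree, ‖p.coeff i‖ * ‖z‖ ^ i) * ‖z‖ := by
        gcongr; exact hp.norm_pow_natDegree_le hz
    _ ≤ ∑ i ∈ range p.natDegree, ‖p.coeff i‖ * ‖z‖ ^ p.natDegree := by
        rw [sum_mul]
        refine sum_le_sum fun i hi => ?_
        rw [mul_assoc, ← pow_succ]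
        gcongr
        · exact hz1.le
        · exact mem_range.mp hi
    _ ≤ ‖z‖ ^ p.natDegree := by
        rw [← sum_mul]; exact mul_le_of_le_one_left hpow.le hsum

lemma sum_norm_coeff_le_one_of_mul_X_sub_C {q : K[X]} (hq : q.Monic) {z : K} (hz : 1 < ‖z‖)
    (hdom : 1 + ∑ i ∈ range q.natDegree, ‖((X - C z) * q).coeff i‖ ≤
      ‖((X - C z) * q).coeff q.natDegree‖) :
    ∑ i ∈ range q.natDegree, ‖q.coeff i‖ ≤ 1 := by
  set d := q.natDegree
  have hcoeff : ∀ i, ((X - C z) * q).coeff i = (X * q).coeff i - z * q.coeff i := fun i => by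
    rw [sub_mul, coeff_sub, coeff_C_mul]
  have hstep : ∀ i, ‖z‖ * ‖q.coeff i‖ ≤ ‖((X - C z) * q).coeff i‖ + ‖(X * q).coeff i‖ := by
    intro i
    rw [← norm_mul, hcoeff, add_comm]
    exact (norm_sub_le _ _).trans_eq' (by ring_nf)
  have hshift : ∑ i ∈ range (d + 1), ‖(X * q).coeff i‖ = ∑ i ∈ range d, ‖q.coeff i‖ := by
    simp [sum_range_succ', coeff_X_mul]
  have htop : ‖((X - C z) * q).coeff d‖ ≤ ‖(X * q).coeff d‖ + ‖z‖ := by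
    rw [hcoeff, hq.coeff_natDegree, mul_one]; exact norm_sub_le _ _
  have hsum := sum_le_sum fun i (_ : i ∈ range d) => hstep i
  rw [← mul_sum, sum_add_distrib] at hsum
  rw [sum_range_succ] at hshift
  have hkey : (‖z‖ - 1) * (∑ i ∈ range d, ‖q.coeff i‖ - 1) ≤ 0 := by linarith
  linarith [nonpos_of_mul_nonpos_right hkey (sub_pos.mpr hz)]

end NormedField

lemma Monic.eq_one_or_eq_neg_one_of_isRoot_of_norm_eq_one {p : ℂ[X]} (hp : p.Monic) {d : ℕ}
    (hdeg : p.natDegree = d + 1) {a : ℝ} (ha : p.coeff d = a)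
    (hdom : 1 + ∑ i ∈ range d, ‖p.coeff i‖ ≤ |a|) {z : ℂ} (hz : p.IsRoot z) (hz1 : ‖z‖ = 1) :
    z = 1 ∨ z = -1 := by
  have hcoeff : p.coeff (d + 1) = 1 := hdeg ▸ hp.coeff_natDegree
  rw [IsRoot.def, eval_eq_sum_range, hdeg, sum_range_succ, sum_range_succ, hcoeff, ha] at hz
  have hfactor : z ^ d * (z + a) = -∑ i ∈ range d, p.coeff i * z ^ i := by
    linear_combination hz
  refine Complex.eq_one_or_eq_neg_one_of_norm_add_le (a := a) hz1 ?_
  calc ‖z + a‖ = ‖z ^ d * (z + a)‖ := by rw [norm_mul, norm_pow, hz1, one_pow, one_mul]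
    _ ≤ ∑ i ∈ range d, ‖p.coeff i‖ := by
        rw [hfactor, norm_neg]
        refine (norm_sum_le _ _).trans_eq (sum_congr rfl fun i _ => ?_)
        rw [norm_mul, norm_pow, hz1, one_pow, mul_one]
    _ ≤ |a| - 1 := by linarith

lemma Monic.exists_isRoot_one_le_norm {p : ℂ[X]} (hp : p.Monic) (hd : 0 < p.natDegree)
    (h0 : 1 ≤ ‖p.coeff 0‖) : ∃ z, p.IsRoot z ∧ 1 ≤ ‖z‖ := by
  by_contra! hroots
  have hne : p.roots ≠ 0 := by
    rw [← Multiset.card_pos, IsAlgClosed.card_roots_eq_natDegree]; exact hd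
  have hpos : ∀ z ∈ p.roots, 0 < ‖z‖ := by
    intro z hz
    refine norm_pos_iff.mpr fun hz0 => ?_
    rw [hz0] at hz
    have := (mem_roots hp.ne_zero).mp hz
    rw [IsRoot.def, ← coeff_zero_eq_eval_zero] at this
    norm_num [this] at h0
  have hlt := Multiset.prod_map_lt_prod_map hne (‖·‖) (fun _ => (1 : ℝ)) hpos
    fun z hz => hroots z ((mem_roots hp.ne_zero).mp hz)
  rw [(IsAlgClosed.splits p).coeff_zero_eq_prod_roots_of_monic hp, norm_mul, norm_pow, norm_neg,
    norm_one, one_pow, one_mul] at h0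
  simp only [Multiset.map_const', Multiset.prod_replicate, one_pow] at hlt
  exact hlt.not_ge (h0.trans_eq (map_multiset_prod (normHom : ℂ →*₀ ℝ) p.roots))

lemma one_le_norm_coeff_zero_map {f : ℤ[X]} (h0 : f.coeff 0 ≠ 0) :
    1 ≤ ‖(f.map (algebraMap ℤ ℂ)).coeff 0‖ := by
  rw [coeff_map, algebraMap_int_eq, eq_intCast, Complex.norm_intCast]
  exact_mod_cast Int.one_le_abs h0

lemma Monic.norm_ne_one_of_isRoot_map {f : ℤ[X]} (hf : f.Monic) {d : ℕ}
    (hdeg : f.natDegree = d + 1)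
    (hdom : 1 + ∑ i ∈ range d, ‖(f.map (algebraMap ℤ ℂ)).coeff i‖ ≤
      ‖(f.map (algebraMap ℤ ℂ)).coeff d‖)
    (h1 : f.eval 1 ≠ 0) (hm1 : f.eval (-1) ≠ 0) {w : ℂ}
    (hw : (f.map (algebraMap ℤ ℂ)).IsRoot w) : ‖w‖ ≠ 1 := by
  have hroot : ∀ t : ℤ, (f.map (algebraMap ℤ ℂ)).IsRoot t → f.eval t = 0 := fun t ht => by
    rwa [IsRoot, eval_intCast_map, algebraMap_int_eq, eq_intCast, Int.cast_eq_zero] at ht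
  have hcoeff : (f.map (algebraMap ℤ ℂ)).coeff d = ((f.coeff d : ℝ) : ℂ) := by simp
  rw [hcoeff, Complex.norm_real, Real.norm_eq_abs] at hdom
  intro hw1
  rcases (hf.map _).eq_one_or_eq_neg_one_of_isRoot_of_norm_eq_one
    (by rw [hf.natDegree_map, hdeg]) hcoeff hdom hw hw1 with rfl | rfl
  · exact h1 (hroot 1 (by simpa using hw))
  · exact hm1 (hroot (-1) (by simpa using hw))

lemma Monic.irreducible_of_map_eq_X_sub_C_mul {f : ℤ[X]} (hf : f.Monic) (h0 : f.coeff 0 ≠ 0)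
    (hd : 0 < f.natDegree) {z : ℂ} {q : ℂ[X]} (hfq : f.map (algebraMap ℤ ℂ) = (X - C z) * q)
    (hq : ∀ w, q.IsRoot w → ‖w‖ < 1) : Irreducible f := by
  have key : ∀ g h : ℤ[X], g.Monic → h.Monic → g * h = f →
      (g.map (algebraMap ℤ ℂ)).IsRoot z → h.natDegree = 0 := by
    intro g h hg hh hgh hz
    obtain ⟨g', hg'⟩ := dvd_iff_isRoot.mpr hz
    have hqgh : q = g' * h.map (algebraMap ℤ ℂ) := by
      refine mul_left_cancel₀ (X_sub_C_ne_zero z) ?_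
      rw [← hfq, ← hgh, Polynomial.map_mul, hg', mul_assoc]
    have hh0 : h.coeff 0 ≠ 0 := right_ne_zero_of_mul (by rwa [← mul_coeff_zero, hgh])
    by_contra hdh
    obtain ⟨w, hw, hw1⟩ := (hh.map (algebraMap ℤ ℂ)).exists_isRoot_one_le_norm
      (by rw [hh.natDegree_map]; omega) (one_le_norm_coeff_zero_map hh0)
    exact (hq w (by rw [hqgh, IsRoot, eval_mul, hw.eq_zero, mul_zero])).not_ge hw1
  rw [hf.irreducible_iff_natDegree]
  refine ⟨fun h1 => by simp [h1] at hd, fun g h hg hh hgh => ?_⟩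
  have hz : ((g * h).map (algebraMap ℤ ℂ)).IsRoot z := by rw [hgh, hfq]; simp
  rw [Polynomial.map_mul, IsRoot, eval_mul, mul_eq_zero] at hz
  rcases hz with hz | hz
  · exact .inr (key g h hg hh hgh hz)
  · exact .inl (key h g hh hg (by rw [mul_comm, hgh]) hz)

end Polynomial

theorem stmt_14 (n : ℕ) (hn : 2 ≤ n) (f : Polynomial ℤ) (hmonic : f.Monic)
    (hdeg : f.natDegree = n) (h0 : f.coeff 0 ≠ 0)
    (hdom : |f.coeff (n - 1)| = 1 + ∑ i ∈ Finset.range (n - 1), |f.coeff i|)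
    (h1 : f.eval 1 ≠ 0) (hm1 : f.eval (-1) ≠ 0) :
    Irreducible (f.map (algebraMap ℤ ℚ)) := by
  obtain ⟨d, rfl⟩ : ∃ d, n = d + 1 := ⟨n - 1, by omega⟩
  rw [Nat.add_sub_cancel] at hdom
  rw [← hmonic.irreducible_iff_irreducible_map_fraction_map]
  set F := f.map (algebraMap ℤ ℂ)
  have hFm : F.Monic := hmonic.map _
  have hdomF : 1 + ∑ i ∈ range d, ‖F.coeff i‖ ≤ ‖F.coeff d‖ := by
    simp only [F, coeff_map, algebraMap_int_eq, eq_intCast, Complex.norm_intCast]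
    exact_mod_cast hdom.ge
  have hunit : ∀ w, F.IsRoot w → ‖w‖ ≠ 1 := fun _ =>
    hmonic.norm_ne_one_of_isRoot_map hdeg hdomF h1 hm1
  obtain ⟨z, hz, hz1⟩ := hFm.exists_isRoot_one_le_norm (by rw [hmonic.natDegree_map]; omega)
    (one_le_norm_coeff_zero_map h0)
  obtain ⟨q, hq⟩ := dvd_iff_isRoot.mpr hz
  have hqm : q.Monic := (monic_X_sub_C z).of_mul_monic_left (hq ▸ hFm)
  have hqdeg : q.natDegree = d := by
    have := (monic_X_sub_C z).natDegree_mul hqm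
    rw [← hq, hmonic.natDegree_map, hdeg, natDegree_X_sub_C] at this
    omega
  have hsum := sum_norm_coeff_le_one_of_mul_X_sub_C hqm (hz1.lt_of_ne' (hunit z hz))
    (by rw [← hq, hqdeg]; exact hdomF)
  refine hmonic.irreducible_of_map_eq_X_sub_C_mul h0 (by omega) hq fun w hw =>
    (hqm.norm_le_one_of_sum_norm_coeff_le_one hsum hw).lt_of_ne (hunit w ?_)
  rw [hq, IsRoot, eval_mul, hw.eq_zero, mul_zero]
end
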